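/- Fix q ≥ 1, θ > 0 and p ∈ Δ^{q−1}. For every n ≥ 2 and every B ∈ 𝒜_{n−1}, ∑_{A ∈ 𝒜_n} S_{n,n−1}(A,B) · Esf_{θ,p}^n(A) = Esf_{θ,p}^{n−1}(B), where S_{n,n−1}(A,B) = ∑_{(𝐚,j) : 𝐚 ∈ supp A, a_j ≥ 1, A_{∖𝐚,j} = B} a_j A(𝐚)/n is the kernel removing one uniformly random colored element from A. Consequently the family (Esf_{θ,p}^n)_{n ≥ 1} is consistent with respect to the system of kernels generated by these one-step kernels under composition. -/

import Mathlib

open Finset Nat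
open scoped Classical

/-- `col(A) = ∑_𝐚 A(𝐚) • 𝐚`, the color count vector of a colored partition. -/
def colA {q : ℕ} (A : (Fin q → ℕ) →₀ ℕ) : Fin q → ℕ :=
  fun j => ∑ a ∈ A.support, A a * a j

/-- `‖A‖ = ∑_𝐚 A(𝐚)`, the number of parts of a colored partition. -/
def asize {q : ℕ} (A : (Fin q → ℕ) →₀ ℕ) : ℕ := ∑ a ∈ A.support, A a

/-- The multinomial coefficient `M_𝐧(A)` of a colored partition `A ⊨ 𝐧`. -/
noncomputable def Mcoef {q : ℕ} (n : Fin q → ℕ) (A : (Fin q → ℕ) →₀ ℕ) : ℝ :=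
  (∏ j, (n j)! : ℝ) *
    ∏ a ∈ A.support,
      ((Nat.multinomial Finset.univ a : ℝ) ^ A a / ((∑ j, a j : ℝ) ^ A a * (A a)!))

/-- The polychromatic Ewens sampling formula
`Esf_{θ,p}^n(A) = (n!/(θ)_n) θ^{‖A‖} (p^{col A}/(col A)!) M_{col A}(A)`. -/
noncomputable def esf {q : ℕ} (θ : ℝ) (p : Fin q → ℝ) (n : ℕ)
    (A : (Fin q → ℕ) →₀ ℕ) : ℝ :=
  (n ! : ℝ) / (ascPochhammer ℝ n).eval θ * θ ^ asize A *
    ((∏ j, p j ^ colA A j) / ∏ j, ((colA A j)! : ℝ)) * Mcoef (colA A) A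

/-- The `j`-th standard basis vector of `ℕ^q`. -/
def eVec {q : ℕ} (j : Fin q) : Fin q → ℕ := fun i => if i = j then 1 else 0

/-- `A_{∖𝐚,j}`: the colored partition obtained from `A` by removing one element of color
`j` from a part with color count `𝐚`: it is `A - 1_𝐚` if `𝐚 = e_j`, and
`A - 1_𝐚 + 1_{𝐚-e_j}` otherwise. -/
noncomputable def removeOne {q : ℕ} (A : (Fin q → ℕ) →₀ ℕ) (a : Fin q → ℕ) (j : Fin q) :
    (Fin q → ℕ) →₀ ℕ :=
  if a = eVec j then A - Finsupp.single a 1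
  else A - Finsupp.single a 1 + Finsupp.single (fun i => a i - eVec j i) 1

/-- The one-step consistency kernel
`S_{n,n-1}(A,B) = ∑_{(𝐚,j) : 𝐚 ∈ supp A, a_j ≥ 1, A_{∖𝐚,j} = B} a_j A(𝐚)/n`,
removing one uniformly random colored element from `A`. -/
noncomputable def oneStepKernel {q : ℕ} (n : ℕ) (A B : (Fin q → ℕ) →₀ ℕ) : ℝ :=
  ∑ a ∈ A.support, ∑ j : Fin q,
    if 1 ≤ a j ∧ removeOne A a j = B then (a j * A a : ℝ) / n else 0

/-- The `k`-fold composition `S_{n,n-k}` of the one-step kernels, going from size `n`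
down to size `n - k`. -/
noncomputable def iterKernel {q : ℕ} :
    ℕ → ℕ → ((Fin q → ℕ) →₀ ℕ) → ((Fin q → ℕ) →₀ ℕ) → ℝ
  | 0, _, A, B => if A = B then 1 else 0
  | k + 1, n, A, B => ∑ᶠ C, oneStepKernel n A C * iterKernel k (n - 1) C B

/-!
Write `insertOne B b j` for `B` with one element of color `j` added to a part of type `b`
(`b = 0` opening a new part). The `A` with `S(A, B) ≠ 0` are exactly these, each for a single pair
`(b, j)`, and the only removals from such an `A` that lead back to `B` are those of an element of
color `j` from a part of type `b + e_j`. Since `multinomial(a) = |a| · (|a| - 1)! / a!`, the ratio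
`S(A, B) Esf^{n+1}(A) / Esf^n(B)` is then `p_j r_B(b) / (θ + n)`, with the Chinese-restaurant rates
`r_B(0) = θ` and `r_B(b) = |b| B(b)`; summing over `j` and `b` gives
`(θ + ∑_b |b| B(b)) / (θ + n) = 1`. The statement for the composed kernels follows by induction,
exchanging the finite sums over `𝒜_n`.
-/

section ColoredPartitions

variable {q : ℕ}

lemma eVec_ne_zero (j : Fin q) : eVec j ≠ 0 := fun h => by simpa [eVec] using congrFun h j

lemma eVec_injective : Function.Injective (eVec (q := q)) := fun j j' h => by
  by_contra hne
  simpa [eVec, hne] using congrFun h j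

lemma sum_eVec (j : Fin q) : ∑ i, eVec j i = 1 := by simp [eVec]

lemma prod_pow_eVec (p : Fin q → ℝ) (j : Fin q) : ∏ i, p i ^ eVec j i = p j := by
  simp [eVec, pow_ite]

lemma add_eVec_ne_self (b : Fin q → ℕ) (j : Fin q) : b + eVec j ≠ b := fun h => by
  simpa [eVec] using congrFun h j

lemma sum_ne_zero_of_ne_zero {a : Fin q → ℕ} (ha : a ≠ 0) : ∑ i, a i ≠ 0 := by
  simpa [Finset.sum_eq_zero_iff, funext_iff] using ha

lemma colA_add (A B : (Fin q → ℕ) →₀ ℕ) : colA (A + B) = colA A + colA B :=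
  funext fun j => Finsupp.sum_add_index' (h := fun (a : Fin q → ℕ) (k : ℕ) => k * a j)
    (fun _ => zero_mul _) (fun _ _ _ => add_mul _ _ _)

lemma colA_single (a : Fin q → ℕ) (k : ℕ) : colA (Finsupp.single a k) = k • a :=
  funext fun j =>
    Finsupp.sum_single_index (h := fun (a : Fin q → ℕ) (k : ℕ) => k * a j) (zero_mul _)

lemma asize_add (A B : (Fin q → ℕ) →₀ ℕ) : asize (A + B) = asize A + asize B :=
  Finsupp.sum_add_index' (h := fun _ k => k) (fun _ => rfl) (fun _ _ _ => rfl)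

lemma asize_single (a : Fin q → ℕ) (k : ℕ) : asize (Finsupp.single a k) = k :=
  Finsupp.sum_single_index (h := fun _ k => k) rfl

lemma sum_colA (A : (Fin q → ℕ) →₀ ℕ) : ∑ i, colA A i = ∑ a ∈ A.support, A a * ∑ i, a i := by
  simp only [colA, Finset.mul_sum]
  exact Finset.sum_comm

end ColoredPartitions

section Insertion

variable {q : ℕ}

/-- `𝒜_n`, with a colored partition encoded by its multiplicities on `ℕ^q`, vanishing at `0`. -/
def coloredPartitions (q n : ℕ) : Set ((Fin q → ℕ) →₀ ℕ) := {A | A 0 = 0 ∧ ∑ i, colA A i = n}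

/-- The inverse of `removeOne`: add an element of color `j` to a part of type `b`, where `b = 0`
stands for opening a new part. -/
noncomputable def insertOne (B : (Fin q → ℕ) →₀ ℕ) (b : Fin q → ℕ) (j : Fin q) :
    (Fin q → ℕ) →₀ ℕ :=
  B - Finsupp.single b 1 + Finsupp.single (b + eVec j) 1

lemma tsub_single_zero {B : (Fin q → ℕ) →₀ ℕ} (hB : B 0 = 0) : B - Finsupp.single 0 1 = B := by
  ext a
  by_cases h : a = 0 <;> simp [h, hB]

lemma tsub_single_add_single {B : (Fin q → ℕ) →₀ ℕ} {b : Fin q → ℕ} (hb : b ∈ B.support) :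
    B - Finsupp.single b 1 + Finsupp.single b 1 = B :=
  tsub_add_cancel_of_le (Finsupp.single_le_iff.mpr (Nat.one_le_iff_ne_zero.mpr
    (Finsupp.mem_support_iff.mp hb)))

lemma colA_tsub_single_add {B : (Fin q → ℕ) →₀ ℕ} (hB : B 0 = 0) {b : Fin q → ℕ}
    (hb : b ∈ insert 0 B.support) : colA (B - Finsupp.single b 1) + b = colA B := by
  rcases Finset.mem_insert.mp hb with rfl | hb
  · rw [tsub_single_zero hB, add_zero]
  · conv_rhs => rw [← tsub_single_add_single hb]
    rw [colA_add, colA_single, one_smul]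

lemma colA_insertOne {B : (Fin q → ℕ) →₀ ℕ} (hB : B 0 = 0) {b : Fin q → ℕ}
    (hb : b ∈ insert 0 B.support) (j : Fin q) : colA (insertOne B b j) = colA B + eVec j := by
  rw [insertOne, colA_add, colA_single, one_smul, ← add_assoc, colA_tsub_single_add hB hb]

lemma insertOne_apply_zero {B : (Fin q → ℕ) →₀ ℕ} (hB : B 0 = 0) (b : Fin q → ℕ) (j : Fin q) :
    insertOne B b j 0 = 0 := by
  have h : b + eVec j ≠ 0 := fun h => eVec_ne_zero j (by simpa using congrArg (· - b) h)
  simp [insertOne, Finsupp.single_apply, h.symm, hB]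

lemma insertOne_apply_add_eVec (B : (Fin q → ℕ) →₀ ℕ) (b : Fin q → ℕ) (j : Fin q) :
    insertOne B b j (b + eVec j) = B (b + eVec j) + 1 := by
  simp [insertOne, eVec_ne_zero]

lemma insertOne_mem_coloredPartitions {B : (Fin q → ℕ) →₀ ℕ} (hB : B 0 = 0) {b : Fin q → ℕ}
    (hb : b ∈ insert 0 B.support) (j : Fin q) {n : ℕ} :
    insertOne B b j ∈ coloredPartitions q (n + 1) ↔ B ∈ coloredPartitions q n := by
  simp only [coloredPartitions, Set.mem_ofPred_eq, insertOne_apply_zero hB, hB, true_and,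
    colA_insertOne hB hb, Pi.add_apply, Finset.sum_add_distrib, sum_eVec, Nat.add_right_cancel_iff]

lemma removeOne_insertOne {B : (Fin q → ℕ) →₀ ℕ} (hB : B 0 = 0) {b : Fin q → ℕ}
    (hb : b ∈ insert 0 B.support) (j : Fin q) :
    removeOne (insertOne B b j) (b + eVec j) j = B := by
  have hsub : insertOne B b j - Finsupp.single (b + eVec j) 1 = B - Finsupp.single b 1 :=
    add_tsub_cancel_right _ _
  rcases Finset.mem_insert.mp hb with rfl | hb
  · rw [removeOne, if_pos (zero_add _), hsub, tsub_single_zero hB]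
  · have hb0 : b ≠ 0 := by rintro rfl; exact Finsupp.mem_support_iff.mp hb hB
    have hne : b + eVec j ≠ eVec j := fun h => hb0 (by simpa using congrArg (· - eVec j) h)
    rw [removeOne, if_neg hne, hsub]
    convert tsub_single_add_single hb using 3
    exact add_tsub_cancel_right b (eVec j)

lemma exists_insertOne_of_removeOne {A : (Fin q → ℕ) →₀ ℕ} (hA : A 0 = 0) {a : Fin q → ℕ}
    (ha : a ∈ A.support) {j : Fin q} (haj : 1 ≤ a j) :
    removeOne A a j 0 = 0 ∧ ∃ b ∈ insert 0 (removeOne A a j).support,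
      a = b + eVec j ∧ insertOne (removeOne A a j) b j = A := by
  have hab : a - eVec j + eVec j = a := tsub_add_cancel_of_le fun i => by
    by_cases h : i = j <;> simp [eVec, h, haj]
  have hA' : A - Finsupp.single a 1 + Finsupp.single a 1 = A := tsub_single_add_single ha
  have hA0 : (A - Finsupp.single a 1 : (Fin q → ℕ) →₀ ℕ) 0 = 0 := by simp [hA]
  by_cases hev : a = eVec j
  · rw [removeOne, if_pos hev]
    refine ⟨hA0, 0, Finset.mem_insert_self _ _, by rw [zero_add, hev], ?_⟩
    rw [insertOne, tsub_single_zero hA0, zero_add, ← hev, hA']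
  · have hb0 : a - eVec j ≠ 0 := fun h => hev (by rw [← hab, h, zero_add])
    rw [removeOne, if_neg hev, show (fun i => a i - eVec j i) = a - eVec j from rfl]
    refine ⟨by simp [hA, Finsupp.single_apply, Ne.symm hb0], a - eVec j, ?_, hab.symm, ?_⟩
    · exact Finset.mem_insert_of_mem (by simp)
    · rw [insertOne, add_tsub_cancel_right]
      exact (congrArg (fun c => A - Finsupp.single a 1 + Finsupp.single c 1) hab).trans hA'

lemma insertOne_injOn {B : (Fin q → ℕ) →₀ ℕ} (hB : B 0 = 0) :
    Set.InjOn (fun x : (Fin q → ℕ) × Fin q => insertOne B x.1 x.2)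
      ↑(insert 0 B.support ×ˢ (Finset.univ : Finset (Fin q))) := by
  rintro ⟨b, j⟩ hbj ⟨b', j'⟩ hbj' h
  simp only [Finset.coe_product, Set.mem_prod, Finset.mem_coe] at hbj hbj' h
  have hj : j = j' := eVec_injective <| add_left_cancel <| by
    rw [← colA_insertOne hB hbj.1, ← colA_insertOne hB hbj'.1, h]
  subst hj
  by_contra hne
  have hb : b' ≠ b := fun h => hne (by rw [h])
  -- Compare the multiplicities of the part `b + eVec j`, which the left side increases.
  have key := DFunLike.congr_fun h (b + eVec j)
  rw [insertOne_apply_add_eVec, insertOne] at key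
  simp [Finsupp.single_apply, hb] at key
  omega

lemma removeOne_insertOne_eq_iff {B : (Fin q → ℕ) →₀ ℕ} (hB : B 0 = 0) {b : Fin q → ℕ}
    (hb : b ∈ insert 0 B.support) {j : Fin q} {a : Fin q → ℕ} {j' : Fin q}
    (ha : a ∈ (insertOne B b j).support) (haj : 1 ≤ a j') :
    removeOne (insertOne B b j) a j' = B ↔ a = b + eVec j ∧ j' = j := by
  refine ⟨fun h => ?_, ?_⟩
  · obtain ⟨-, b', hb', rfl, h'⟩ :=
      exists_insertOne_of_removeOne (insertOne_apply_zero hB b j) ha haj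
    rw [h] at hb' h'
    have hbj := insertOne_injOn hB (Finset.mem_coe.mpr (Finset.mk_mem_product hb' (mem_univ j')))
      (Finset.mem_coe.mpr (Finset.mk_mem_product hb (mem_univ j))) h'
    obtain ⟨rfl, rfl⟩ := Prod.mk.inj hbj
    exact ⟨rfl, rfl⟩
  · rintro ⟨rfl, rfl⟩
    exact removeOne_insertOne hB hb _

lemma oneStepKernel_insertOne {B : (Fin q → ℕ) →₀ ℕ} (hB : B 0 = 0) {b : Fin q → ℕ}
    (hb : b ∈ insert 0 B.support) (j : Fin q) (n : ℕ) :
    oneStepKernel n (insertOne B b j) B = (b j + 1) * (B (b + eVec j) + 1) / n := by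
  have hmem : b + eVec j ∈ (insertOne B b j).support := by
    simp [Finsupp.mem_support_iff, insertOne_apply_add_eVec]
  rw [oneStepKernel, Finset.sum_eq_single_of_mem _ hmem, Fintype.sum_eq_single j]
  · rw [if_pos ⟨by simp [eVec], removeOne_insertOne hB hb j⟩, insertOne_apply_add_eVec]
    simp [eVec]
  · intro j' hj'
    exact if_neg fun h => hj' ((removeOne_insertOne_eq_iff hB hb hmem h.1).mp h.2).2
  · intro a ha hab
    exact Finset.sum_eq_zero fun j' _ =>
      if_neg fun h => hab ((removeOne_insertOne_eq_iff hB hb ha h.1).mp h.2).1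

end Insertion

lemma Finsupp.prod_add_single_one {α M : Type*} [CommMonoid M] (g : α → ℕ → M)
    (hg : ∀ a, g a 0 = 1) (C : α →₀ ℕ) (c : α) :
    (C + Finsupp.single c 1).prod g = g c (C c + 1) * (C.erase c).prod g := by
  rw [← Finsupp.mul_prod_erase' _ c g hg, Finsupp.erase_add, Finsupp.erase_single, add_zero]
  simp

section Weights

variable {q : ℕ}

/-- The factor `multinomial(a) / |a|` contributed by a part of type `a`. -/
noncomputable def partWeight (a : Fin q → ℕ) : ℝ := ((∑ i, a i) - 1)! / ∏ i, ((a i)! : ℝ)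

lemma multinomial_eq_mul_partWeight {a : Fin q → ℕ} (ha : a ≠ 0) :
    (Nat.multinomial univ a : ℝ) = (∑ i, a i : ℕ) * partWeight a := by
  have hspec : (∏ i, ((a i)! : ℝ)) * Nat.multinomial univ a = (∑ i, a i)! := by
    exact_mod_cast Nat.multinomial_spec univ a
  have hfac : ((∑ i, a i)! : ℝ) = (∑ i, a i : ℕ) * ((∑ i, a i) - 1)! := by
    exact_mod_cast (Nat.mul_factorial_pred (sum_ne_zero_of_ne_zero ha)).symm
  have hpos : (0 : ℝ) < ∏ i, ((a i)! : ℝ) := by positivity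
  rw [partWeight, mul_div_assoc', ← hfac, ← hspec]
  field_simp

lemma partWeight_eVec (j : Fin q) : partWeight (eVec j) = 1 := by
  have hfac : ∀ i, ((eVec j i)! : ℝ) = 1 := fun i => by by_cases h : i = j <;> simp [eVec, h]
  simp [partWeight, sum_eVec, hfac]

lemma partWeight_add_eVec {b : Fin q → ℕ} (hb : b ≠ 0) (j : Fin q) :
    partWeight (b + eVec j) * (b j + 1) = partWeight b * (∑ i, b i : ℕ) := by
  have hsum : ∑ i, (b + eVec j) i - 1 = ∑ i, b i := by
    simp [Finset.sum_add_distrib, sum_eVec]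
  have hfac : ((∑ i, b i)! : ℝ) = (∑ i, b i : ℕ) * ((∑ i, b i) - 1)! := by
    exact_mod_cast (Nat.mul_factorial_pred (sum_ne_zero_of_ne_zero hb)).symm
  have hprod : ∏ i, (((b + eVec j) i)! : ℝ) = (∏ i, ((b i)! : ℝ)) * (b j + 1) := by
    rw [Fintype.prod_eq_mul_prod_compl j, Fintype.prod_eq_mul_prod_compl j (fun i => ((b i)! : ℝ))]
    have hrest : ∀ i ∈ ({j}ᶜ : Finset (Fin q)), (((b + eVec j) i)! : ℝ) = (b i)! := fun i hi => by
      simp [eVec, show i ≠ j by simpa using hi]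
    rw [Finset.prod_congr rfl hrest]
    simp [eVec, Nat.factorial_succ]
    ring
  have hpos : (0 : ℝ) < ∏ i, ((b i)! : ℝ) := by positivity
  rw [partWeight, partWeight, hsum, hprod, hfac]
  field_simp

noncomputable def esfWeight (θ : ℝ) (p : Fin q → ℝ) (A : (Fin q → ℕ) →₀ ℕ) : ℝ :=
  θ ^ asize A * (∏ j, p j ^ colA A j) * A.prod fun a k => partWeight a ^ k / k !

lemma esf_eq_mul_esfWeight (θ : ℝ) (p : Fin q → ℝ) (n : ℕ) {A : (Fin q → ℕ) →₀ ℕ}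
    (hA : A 0 = 0) : esf θ p n A = n ! / (ascPochhammer ℝ n).eval θ * esfWeight θ p A := by
  have hpart : ∀ a ∈ A.support,
      (Nat.multinomial univ a : ℝ) ^ A a / ((∑ j, a j : ℝ) ^ A a * (A a)!)
        = partWeight a ^ A a / (A a)! := fun a ha => by
    have ha0 : a ≠ 0 := by rintro rfl; exact Finsupp.mem_support_iff.mp ha hA
    have hsum : (∑ j, a j : ℝ) ≠ 0 := by exact_mod_cast sum_ne_zero_of_ne_zero ha0
    rw [multinomial_eq_mul_partWeight ha0, mul_pow, Nat.cast_sum]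
    exact mul_div_mul_left _ _ (pow_ne_zero _ hsum)
  have hcol : (0 : ℝ) < ∏ j, ((colA A j)! : ℝ) := by positivity
  rw [esf, Mcoef, Finset.prod_congr rfl hpart, esfWeight, Finsupp.prod]
  field_simp

lemma esfWeight_add_single (θ : ℝ) (p : Fin q → ℝ) (C : (Fin q → ℕ) →₀ ℕ) (c : Fin q → ℕ) :
    esfWeight θ p (C + Finsupp.single c 1) * (C c + 1)
      = θ * (∏ i, p i ^ c i) * partWeight c * esfWeight θ p C := by
  have hg : ∀ a : Fin q → ℕ, partWeight a ^ 0 / ((0 : ℕ)! : ℝ) = 1 := by simp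
  rw [esfWeight, esfWeight, asize_add, asize_single, colA_add, colA_single, one_smul,
    Finsupp.prod_add_single_one _ hg, ← Finsupp.mul_prod_erase' C c _ hg]
  simp only [Pi.add_apply, pow_add, Finset.prod_mul_distrib, Nat.factorial_succ]
  push_cast
  field_simp

end Weights

section OneStep

variable {q : ℕ}

/-- Chinese-restaurant rates: a new part (`b = 0`) is opened at rate `θ`, and each of the `B b`
parts of type `b` grows at rate `|b|`. -/
noncomputable def insertRate (θ : ℝ) (B : (Fin q → ℕ) →₀ ℕ) (b : Fin q → ℕ) : ℝ :=
  if b = 0 then θ else (∑ i, b i : ℕ) * B b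

lemma sum_insertRate (θ : ℝ) {B : (Fin q → ℕ) →₀ ℕ} (hB : B 0 = 0) :
    ∑ b ∈ insert 0 B.support, insertRate θ B b = θ + ∑ i, colA B i := by
  have h0 : (0 : Fin q → ℕ) ∉ B.support := by simp [hB]
  rw [Finset.sum_insert h0, insertRate, if_pos rfl, sum_colA]
  push_cast
  refine congrArg _ (Finset.sum_congr rfl fun b hb => ?_)
  simp [insertRate, ne_of_mem_of_not_mem hb h0, mul_comm]

lemma esfWeight_insertOne (θ : ℝ) (p : Fin q → ℝ) {B : (Fin q → ℕ) →₀ ℕ} (hB : B 0 = 0)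
    {b : Fin q → ℕ} (hb : b ∈ insert 0 B.support) (j : Fin q) :
    esfWeight θ p (insertOne B b j) * ((b j + 1) * (B (b + eVec j) + 1))
      = p j * insertRate θ B b * esfWeight θ p B := by
  set C := B - Finsupp.single b 1
  have hCb : C (b + eVec j) = B (b + eVec j) := by simp [C, (add_eVec_ne_self b j).symm]
  have hA := esfWeight_add_single θ p C (b + eVec j)
  rw [hCb] at hA
  simp only [Pi.add_apply, pow_add, Finset.prod_mul_distrib, prod_pow_eVec] at hA
  change esfWeight θ p (insertOne B b j) * _ = _ at hA
  rcases Finset.mem_insert.mp hb with rfl | hb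
  · simp only [C, tsub_single_zero hB, zero_add, partWeight_eVec] at hA
    simp only [insertRate, if_pos, zero_add, Pi.zero_apply, Nat.cast_zero, pow_zero,
      Finset.prod_const_one] at hA ⊢
    linear_combination hA
  · have hb0 : b ≠ 0 := by rintro rfl; exact Finsupp.mem_support_iff.mp hb hB
    have hB' := esfWeight_add_single θ p C b
    have hCb' : (C b : ℝ) + 1 = B b := by
      rw [← tsub_single_add_single hb]
      simp [C]
    rw [tsub_single_add_single hb, hCb'] at hB'
    rw [insertRate, if_neg hb0]
    linear_combination (b j + 1 : ℝ) * hA - p j * (∑ i, b i : ℕ) * hB'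
      + θ * (∏ i, p i ^ b i) * p j * esfWeight θ p C * partWeight_add_eVec hb0 j

lemma exists_insertOne_of_oneStepKernel_ne_zero {A B : (Fin q → ℕ) →₀ ℕ} (hA : A 0 = 0) {n : ℕ}
    (h : oneStepKernel n A B ≠ 0) :
    B 0 = 0 ∧ ∃ b ∈ insert 0 B.support, ∃ j, insertOne B b j = A := by
  obtain ⟨a, ha, h⟩ := Finset.exists_ne_zero_of_sum_ne_zero h
  obtain ⟨j, -, h⟩ := Finset.exists_ne_zero_of_sum_ne_zero h
  obtain ⟨⟨haj, rfl⟩, -⟩ := ite_ne_right_iff.mp h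
  obtain ⟨hB, b, hb, -, hA'⟩ := exists_insertOne_of_removeOne hA ha haj
  exact ⟨hB, b, hb, j, hA'⟩

lemma oneStepKernel_mul_esf_insertOne (θ : ℝ) (p : Fin q → ℝ) {B : (Fin q → ℕ) →₀ ℕ}
    (hB : B 0 = 0) {b : Fin q → ℕ} (hb : b ∈ insert 0 B.support) (j : Fin q) (N : ℕ) :
    oneStepKernel (N + 1) (insertOne B b j) B * esf θ p (N + 1) (insertOne B b j)
      = p j * insertRate θ B b / (θ + N) * esf θ p N B := by
  rw [oneStepKernel_insertOne hB hb, esf_eq_mul_esfWeight _ _ _ (insertOne_apply_zero hB b j),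
    esf_eq_mul_esfWeight _ _ _ hB, ascPochhammer_succ_eval]
  calc _ = ((N + 1 : ℕ)! / (N + 1 : ℕ)) / ((ascPochhammer ℝ N).eval θ * (θ + N))
        * (esfWeight θ p (insertOne B b j) * ((b j + 1) * (B (b + eVec j) + 1))) := by ring
    _ = _ := by
      rw [esfWeight_insertOne θ p hB hb j, Nat.factorial_succ]
      push_cast
      field_simp

theorem sum_oneStepKernel_mul_esf {θ : ℝ} {N : ℕ} (hθ : θ + N ≠ 0) {p : Fin q → ℝ}
    (hp : ∑ j, p j = 1) {B : (Fin q → ℕ) →₀ ℕ} (hB : B ∈ coloredPartitions q N) :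
    ∑ᶠ A ∈ coloredPartitions q (N + 1), oneStepKernel (N + 1) A B * esf θ p (N + 1) A
      = esf θ p N B := by
  obtain ⟨hB0, hBN⟩ := hB
  set s := insert 0 B.support ×ˢ (Finset.univ : Finset (Fin q))
  have himage : ∑ᶠ A ∈ coloredPartitions q (N + 1), oneStepKernel (N + 1) A B * esf θ p (N + 1) A
      = ∑ᶠ A ∈ (fun x : (Fin q → ℕ) × Fin q => insertOne B x.1 x.2) '' ↑s,
          oneStepKernel (N + 1) A B * esf θ p (N + 1) A := by
    refine finsum_mem_inter_support_eq' _ _ _ fun A hA => ⟨fun hA' => ?_, ?_⟩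
    · obtain ⟨-, b, hb, j, rfl⟩ :=
        exists_insertOne_of_oneStepKernel_ne_zero hA'.1 (left_ne_zero_of_mul hA)
      exact ⟨(b, j), by simpa [s] using hb, rfl⟩
    · rintro ⟨x, hx, rfl⟩
      exact (insertOne_mem_coloredPartitions hB0 (Finset.mem_product.mp hx).1 x.2).mpr ⟨hB0, hBN⟩
  rw [himage, finsum_mem_image (insertOne_injOn hB0), finsum_mem_coe_finset, Finset.sum_product,
    Finset.sum_congr rfl fun b hb => Finset.sum_congr rfl fun j _ =>
      oneStepKernel_mul_esf_insertOne θ p hB0 hb j N]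
  simp_rw [mul_div_assoc, mul_assoc, ← Finset.sum_mul, hp, one_mul,
    ← Finset.sum_mul, ← Finset.sum_div, sum_insertRate θ hB0, hBN, div_self hθ, one_mul]

end OneStep

section Iteration

variable {q : ℕ}

lemma coloredPartitions_finite (n : ℕ) : (coloredPartitions q n).Finite := by
  -- The parts of `A ∈ 𝒜_n` lie in `[0, n]^q` and occur at most `n` times each.
  set box := Fintype.piFinset fun _ : Fin q => Finset.range (n + 1)
  refine (Set.finite_Iic (∑ a ∈ box, Finsupp.single a n)).subset fun A ⟨hA0, hAn⟩ a => ?_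
  by_cases ha : a ∈ A.support
  · have hle : ∀ i, A a * a i ≤ n := fun i => hAn ▸
      (Finset.single_le_sum (f := fun a => A a * a i) (fun _ _ => Nat.zero_le _) ha).trans
        (Finset.single_le_sum (f := colA A) (fun _ _ => Nat.zero_le _) (Finset.mem_univ i))
    have hA1 : 1 ≤ A a := Nat.one_le_iff_ne_zero.mpr (Finsupp.mem_support_iff.mp ha)
    obtain ⟨i, hi⟩ : ∃ i, a i ≠ 0 := Function.ne_iff.mp fun h => by
      rw [h] at ha; exact Finsupp.mem_support_iff.mp ha hA0
    have hbox : a ∈ box := Fintype.mem_piFinset.mpr fun i' =>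
      Finset.mem_range.mpr (Nat.lt_succ_of_le ((Nat.le_mul_of_pos_left _ hA1).trans (hle i')))
    simp only [Finsupp.finsetSum_apply, Finsupp.single_apply, Finset.sum_ite_eq', if_pos hbox]
    exact (Nat.le_mul_of_pos_right _ (Nat.pos_of_ne_zero hi)).trans (hle i)
  · simp [Finsupp.notMem_support_iff.mp ha]

lemma mem_coloredPartitions_of_oneStepKernel_ne_zero {A C : (Fin q → ℕ) →₀ ℕ} {n k : ℕ}
    (hA : A ∈ coloredPartitions q (n + 1)) (h : oneStepKernel k A C ≠ 0) :
    C ∈ coloredPartitions q n := by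
  obtain ⟨hC, b, hb, j, rfl⟩ := exists_insertOne_of_oneStepKernel_ne_zero hA.1 h
  exact (insertOne_mem_coloredPartitions hC hb j).mp hA

theorem finsum_iterKernel_mul_esf {θ : ℝ} (hθ : 0 < θ) {p : Fin q → ℝ} (hp : ∑ j, p j = 1)
    {m : ℕ} {B : (Fin q → ℕ) →₀ ℕ} (hB : B ∈ coloredPartitions q m) (k : ℕ) :
    ∑ᶠ A ∈ coloredPartitions q (m + k), iterKernel k (m + k) A B * esf θ p (m + k) A
      = esf θ p m B := by
  induction k with
  | zero =>
    rw [add_zero, finsum_mem_inter_support_eq' _ _ {B} fun A hA => ?_, finsum_mem_singleton,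
      iterKernel, if_pos rfl, one_mul]
    obtain rfl : A = B := by by_contra h; simp [iterKernel, h] at hA
    simpa using hB
  | succ k ih =>
    set 𝒜 := coloredPartitions q (m + k)
    set 𝒜' := coloredPartitions q (m + k + 1)
    have hiter : ∀ A ∈ 𝒜', iterKernel (k + 1) (m + k + 1) A B
        = ∑ᶠ C ∈ 𝒜, oneStepKernel (m + k + 1) A C * iterKernel k (m + k) C B := fun A hA => by
      rw [iterKernel, Nat.add_sub_cancel, ← finsum_mem_univ]
      exact finsum_mem_inter_support_eq' _ _ _ fun C hC =>
        ⟨fun _ => mem_coloredPartitions_of_oneStepKernel_ne_zero hA (left_ne_zero_of_mul hC),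
          fun _ => trivial⟩
    calc ∑ᶠ A ∈ 𝒜', iterKernel (k + 1) (m + k + 1) A B * esf θ p (m + k + 1) A
        = ∑ᶠ A ∈ 𝒜', ∑ᶠ C ∈ 𝒜,
            iterKernel k (m + k) C B * (oneStepKernel (m + k + 1) A C * esf θ p (m + k + 1) A) :=
          finsum_mem_congr rfl fun A hA => by
            rw [hiter A hA, finsum_mem_mul]
            exact finsum_mem_congr rfl fun C _ => by ring
      _ = ∑ᶠ C ∈ 𝒜, iterKernel k (m + k) C B *
            ∑ᶠ A ∈ 𝒜', oneStepKernel (m + k + 1) A C * esf θ p (m + k + 1) A := by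
          rw [finsum_mem_comm _ (coloredPartitions_finite _) (coloredPartitions_finite _)]
          simp_rw [mul_finsum_mem]
          rfl
      _ = ∑ᶠ C ∈ 𝒜, iterKernel k (m + k) C B * esf θ p (m + k) C :=
          finsum_mem_congr rfl fun C hC => by
            rw [sum_oneStepKernel_mul_esf (by positivity) hp hC]
      _ = esf θ p m B := ih

end Iteration

theorem esf_consistent_general (q : ℕ) (θ : ℝ) (hθ : 0 < θ)
    (p : Fin q → ℝ) (hp1 : ∑ j, p j = 1) :
    (∀ n, 2 ≤ n → ∀ B : (Fin q → ℕ) →₀ ℕ, B 0 = 0 → (∑ i, colA B i) = n - 1 →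
      ∑ᶠ A ∈ {A : (Fin q → ℕ) →₀ ℕ | A 0 = 0 ∧ (∑ i, colA A i) = n},
        oneStepKernel n A B * esf θ p n A = esf θ p (n - 1) B) ∧
    (∀ n m, 1 ≤ m → m ≤ n → ∀ B : (Fin q → ℕ) →₀ ℕ, B 0 = 0 → (∑ i, colA B i) = m →
      ∑ᶠ A ∈ {A : (Fin q → ℕ) →₀ ℕ | A 0 = 0 ∧ (∑ i, colA A i) = n},
        iterKernel (n - m) n A B * esf θ p n A = esf θ p m B) := by
  refine ⟨fun n hn B hB hcol => ?_, fun n m _ hmn B hB hcol => ?_⟩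
  · obtain ⟨N, rfl⟩ : ∃ N, n = N + 1 := ⟨n - 1, by omega⟩
    rw [Nat.add_sub_cancel] at hcol ⊢
    exact sum_oneStepKernel_mul_esf (by positivity) hp1 ⟨hB, hcol⟩
  · obtain ⟨k, rfl⟩ := Nat.exists_eq_add_of_le hmn
    rw [Nat.add_sub_cancel_left]
    exact finsum_iterKernel_mul_esf hθ hp1 ⟨hB, hcol⟩ k

/-- **Consistency of the polychromatic ESF.** For every `n ≥ 2` and `B ∈ 𝒜_{n-1}`,
`∑_{A ∈ 𝒜_n} S_{n,n-1}(A,B) Esf_{θ,p}^n(A) = Esf_{θ,p}^{n-1}(B)`; consequently the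
family `(Esf_{θ,p}^n)_{n≥1}` is consistent with respect to the system of kernels
generated by the one-step kernels under composition. -/
theorem esf_consistent (q : ℕ) (hq : 1 ≤ q) (θ : ℝ) (hθ : 0 < θ)
    (p : Fin q → ℝ) (hp : ∀ j, 0 ≤ p j) (hp1 : ∑ j, p j = 1) :
    (∀ n, 2 ≤ n → ∀ B : (Fin q → ℕ) →₀ ℕ, B 0 = 0 → (∑ i, colA B i) = n - 1 →
      ∑ᶠ A ∈ {A : (Fin q → ℕ) →₀ ℕ | A 0 = 0 ∧ (∑ i, colA A i) = n},
        oneStepKernel n A B * esf θ p n A = esf θ p (n - 1) B) ∧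
    (∀ n m, 1 ≤ m → m ≤ n → ∀ B : (Fin q → ℕ) →₀ ℕ, B 0 = 0 → (∑ i, colA B i) = m →
      ∑ᶠ A ∈ {A : (Fin q → ℕ) →₀ ℕ | A 0 = 0 ∧ (∑ i, colA A i) = n},
        iterKernel (n - m) n A B * esf θ p n A = esf θ p m B) :=
  esf_consistent_general q θ hθ p hp1
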